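/- Let $V$ and $W$ be finite-dimensional vector spaces over a field $K$, let $f : V \to W$ be a linear map, and let $\pi : V^* \to V$ be a skew-symmetric linear map with graph $L_\pi = \{(\pi(\alpha), \alpha) \mid \alpha \in V^*\} \subseteq V \times V^*$. Then the pushforward $f_*L_\pi = \{(f(X), \beta) \in W \times W^* \mid (X, f^*\beta) \in L_\pi\}$ equals the graph of the skew-symmetric map $f \circ \pi \circ f^* : W^* \to W$; in particular it is a Lagrangian subspace of $W \times W^*$. (This is the fiberwise statement that a map between Poisson manifolds is forward-Dirac if and only if it pushes forward the bivector: $f_*\pi_M = \pi_N$.) -/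

import Mathlib

/-! Unfolding the definitions, `(w, β) ∈ f_*L_π` iff `w = f (π (f^* β))`. For Lagrangianity of
the graph of a skew `π`, skewness gives `⟨(π α, α), (y, β)⟩ = α (y - π β)`, so `(y, β)` is
orthogonal to `L_π` iff every covector vanishes on `y - π β`, i.e. iff `y = π β`. -/

/-- The canonical symmetric pairing `⟨(X, α), (Y, β)⟩ = α(Y) + β(X)` on `V × V*`. -/
noncomputable def canPairing (K V : Type*) [Field K] [AddCommGroup V] [Module K V] :
    LinearMap.BilinForm K (V × Module.Dual K V) :=
  LinearMap.mk₂ K (fun p q => p.2 q.1 + q.2 p.1)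
    (fun p p' q => by simp; ring)
    (fun c p q => by simp; ring)
    (fun p q q' => by simp; ring)
    (fun c p q => by simp; ring)

/-- The graph `{(π(α), α) | α ∈ V*} ⊆ V × V*` of a linear map `π : V* → V`
(a bivector, when `π` is skew-symmetric). -/
noncomputable def bivectorGraph (K V : Type*) [Field K] [AddCommGroup V] [Module K V]
    (π : Module.Dual K V →ₗ[K] V) : Submodule K (V × Module.Dual K V) :=
  Submodule.map (π.prod LinearMap.id) ⊤

/-- The pushforward `f_*L = {(f(X), β) | (X, f^*β) ∈ L} ⊆ W × W*` of a subspace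
`L ⊆ V × V*` along a linear map `f : V → W`. -/
noncomputable def diracPushforward {K V W : Type*} [Field K] [AddCommGroup V] [Module K V]
    [AddCommGroup W] [Module K W] (f : V →ₗ[K] W)
    (L : Submodule K (V × Module.Dual K V)) : Submodule K (W × Module.Dual K W) :=
  Submodule.map (LinearMap.prodMap f (LinearMap.id : Module.Dual K W →ₗ[K] Module.Dual K W))
    (Submodule.comap (LinearMap.prodMap (LinearMap.id : V →ₗ[K] V) f.dualMap) L)

section

variable {K V W : Type*} [Field K] [AddCommGroup V] [Module K V] [AddCommGroup W] [Module K W]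

@[simp]
lemma canPairing_apply (p q : V × Module.Dual K V) :
    canPairing K V p q = p.2 q.1 + q.2 p.1 :=
  rfl

lemma mem_bivectorGraph {π : Module.Dual K V →ₗ[K] V} {p : V × Module.Dual K V} :
    p ∈ bivectorGraph K V π ↔ p.1 = π p.2 := by
  constructor
  · rintro ⟨α, -, rfl⟩
    rfl
  · intro h
    exact ⟨p.2, trivial, Prod.ext h.symm rfl⟩

lemma diracPushforward_bivectorGraph (f : V →ₗ[K] W) (π : Module.Dual K V →ₗ[K] V) :
    diracPushforward f (bivectorGraph K V π) = bivectorGraph K W (f ∘ₗ π ∘ₗ f.dualMap) := by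
  ext ⟨w, β⟩
  simp only [mem_bivectorGraph, LinearMap.comp_apply]
  constructor
  · rintro ⟨⟨x, γ⟩, hx, hxγ⟩
    simp only [SetLike.mem_coe, Submodule.mem_comap, mem_bivectorGraph, LinearMap.prodMap_apply,
      LinearMap.id_apply, Prod.mk.injEq] at hx hxγ
    rw [← hxγ.1, ← hxγ.2, hx]
  · rintro rfl
    exact ⟨(π (f.dualMap β), β), by simp [mem_bivectorGraph], rfl⟩

lemma isSkew_comp_dualMap {π : Module.Dual K V →ₗ[K] V}
    (hπ : ∀ α β : Module.Dual K V, α (π β) = - β (π α)) (f : V →ₗ[K] W) :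
    ∀ α β : Module.Dual K W, α ((f ∘ₗ π ∘ₗ f.dualMap) β) = - β ((f ∘ₗ π ∘ₗ f.dualMap) α) :=
  fun α β => hπ (f.dualMap α) (f.dualMap β)

lemma bivectorGraph_eq_orthogonal {π : Module.Dual K V →ₗ[K] V}
    (hπ : ∀ α β : Module.Dual K V, α (π β) = - β (π α)) :
    bivectorGraph K V π = (canPairing K V).orthogonal (bivectorGraph K V π) := by
  ext ⟨y, β⟩
  have hpair : ∀ α : Module.Dual K V, canPairing K V (π α, α) (y, β) = α (y - π β) := by
    intro α
    rw [canPairing_apply, map_sub, hπ α β]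
    ring
  have hortho : (y, β) ∈ (canPairing K V).orthogonal (bivectorGraph K V π) ↔
      ∀ α : Module.Dual K V, α (y - π β) = 0 := by
    rw [LinearMap.BilinForm.mem_orthogonal_iff]
    refine ⟨fun h α => ?_, fun h ⟨x, α⟩ hp => ?_⟩
    · rw [← hpair]
      exact h _ (mem_bivectorGraph.2 rfl)
    · obtain rfl : x = π α := mem_bivectorGraph.1 hp
      exact (hpair α).trans (h α)
  rw [hortho, Module.forall_dual_apply_eq_zero_iff, sub_eq_zero, mem_bivectorGraph]

end

theorem stmt_13_general (K V W : Type*) [Field K] [AddCommGroup V] [Module K V]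
    [AddCommGroup W] [Module K W]
    (f : V →ₗ[K] W) (π : Module.Dual K V →ₗ[K] V)
    (hπ : ∀ α β : Module.Dual K V, α (π β) = - β (π α)) :
    diracPushforward f (bivectorGraph K V π) =
      bivectorGraph K W (f ∘ₗ π ∘ₗ f.dualMap) ∧
    diracPushforward f (bivectorGraph K V π) =
      (canPairing K W).orthogonal (diracPushforward f (bivectorGraph K V π)) := by
  rw [diracPushforward_bivectorGraph]
  exact ⟨rfl, bivectorGraph_eq_orthogonal (isSkew_comp_dualMap hπ f)⟩

/-- The pushforward of the graph `L_π` of a skew-symmetric map `π : V* → V` along a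
linear map `f : V → W` is the graph of the skew-symmetric map `f ∘ π ∘ f^* : W* → W`;
in particular it is Lagrangian.  This is the fiberwise statement that a map of
Poisson manifolds is forward-Dirac iff it pushes forward the bivector. -/
theorem stmt_13 (K V W : Type*) [Field K] [AddCommGroup V] [Module K V]
    [FiniteDimensional K V] [AddCommGroup W] [Module K W] [FiniteDimensional K W]
    (f : V →ₗ[K] W) (π : Module.Dual K V →ₗ[K] V)
    (hπ : ∀ α β : Module.Dual K V, α (π β) = - β (π α)) :
    diracPushforward f (bivectorGraph K V π) =
      bivectorGraph K W (f ∘ₗ π ∘ₗ f.dualMap) ∧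
    diracPushforward f (bivectorGraph K V π) =
      (canPairing K W).orthogonal (diracPushforward f (bivectorGraph K V π)) :=
  stmt_13_general K V W f π hπ
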